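/- arXiv:2410.17969 — 6 statements merged into one kernel-verified Lean document; each statement's English description precedes it below -/
import Mathlib

section
/- Let K be a field of characteristic not 2 and a, b ∈ K with a, b ≠ 0, a ≠ ±b, and suppose ab = c² for some c ∈ K and a + b ≠ ±2c (so that the AGM child (a', b') = ((a+b)/2, c) lies in the valid domain). Set λ = b²/a² and λ' = (b')²/(a')² = 4ab/(a+b)². Then the map φ(x,y) = ((ax+b)²/(x(a+b)²), −a y (ax−b)(ax+b)/(x²(a+b)³)) sends points (x,y) with x ≠ 0 on the curve y² = x(x−1)(x−λ) to points on the curve y² = x(x−1)(x−λ'). -/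
/-- The AGM isogeny formula maps points of `E_λ` (with `λ = b²/a²`) to points of
`E_{λ'}` (with `λ' = 4ab/(a+b)²`, the λ-invariant of the AGM child `((a+b)/2, c)`). -/
theorem agm_isogeny_maps_curve {K : Type*} [Field K] (h2 : (2 : K) ≠ 0)
    (a b c : K) (ha : a ≠ 0) (hb : b ≠ 0) (hab : a ≠ b) (hab' : a ≠ -b)
    (hc : a * b = c ^ 2) (hc1 : a + b ≠ 2 * c) (hc2 : a + b ≠ -(2 * c))
    (x y : K) (hx : x ≠ 0)
    (hxy : y ^ 2 = x * (x - 1) * (x - b ^ 2 / a ^ 2)) :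
    (-(a * y * (a * x - b) * (a * x + b)) / (x ^ 2 * (a + b) ^ 3)) ^ 2 =
      ((a * x + b) ^ 2 / (x * (a + b) ^ 2)) *
        ((a * x + b) ^ 2 / (x * (a + b) ^ 2) - 1) *
        ((a * x + b) ^ 2 / (x * (a + b) ^ 2) - 4 * (a * b) / (a + b) ^ 2) := by
  have hab0 : a + b ≠ 0 := fun h => hab' (eq_neg_of_add_eq_zero_left h)
  have hd : x * (a + b) ^ 2 ≠ 0 := mul_ne_zero hx (pow_ne_zero _ hab0)
  have hy2 : a ^ 2 * y ^ 2 = x * (x - 1) * (a ^ 2 * x - b ^ 2) := by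
    field_simp at hxy; linear_combination hxy
  have key : (-(a * y * (a * x - b) * (a * x + b)) / (x ^ 2 * (a + b) ^ 3)) ^ 2 =
      (a ^ 2 * y ^ 2) * ((a * x - b) ^ 2 * (a * x + b) ^ 2) / (x ^ 4 * (a + b) ^ 6) := by
    field_simp
  have h1 : (a * x + b) ^ 2 / (x * (a + b) ^ 2) - 1 =
      (x - 1) * (a ^ 2 * x - b ^ 2) / (x * (a + b) ^ 2) := by
    field_simp; ring
  have h2 : (a * x + b) ^ 2 / (x * (a + b) ^ 2) - 4 * (a * b) / (a + b) ^ 2 =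
      (a * x - b) ^ 2 / (x * (a + b) ^ 2) := by
    field_simp; ring
  rw [key, hy2, h1, h2, div_mul_div_comm, div_mul_div_comm, div_eq_div_iff
    (mul_ne_zero (pow_ne_zero _ hx) (pow_ne_zero _ hab0))
    (mul_ne_zero (mul_ne_zero hd hd) hd)]
  ring
end

section
/- Let q ≡ 1 (mod 4) be an odd prime power, and let a, b ∈ 𝔽_q be nonzero with a ≠ ±b, such that a² − b² is a square in 𝔽_q (i.e. (a,b) has a parent in the AGM graph). Then for every λ' in the set {λ, 1/λ, 1−λ, 1/(1−λ), λ/(λ−1), (λ−1)/λ} with λ = b²/a², there exists a pair (c, d) ∈ 𝔽_q² with c, d ≠ 0, c ≠ ±d, d²/c² = λ', and c² − d² a square in 𝔽_q. -/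
/-- Over `𝔽_q` with `q ≡ 1 (mod 4)`, if `(a, b)` (with `a, b ≠ 0`, `a ≠ ±b`)
has a parent (`a² - b²` is a square), then for every `λ'` in the fiber
`{λ, 1/λ, 1-λ, 1/(1-λ), λ/(λ-1), (λ-1)/λ}` of `λ = b²/a²`, there is a pair `(c, d)` with
`d²/c² = λ'` that also has a parent (`c² - d²` is a square). -/
theorem rivals_existence {F : Type*} [Field F] [Fintype F]
    (h2 : (2 : F) ≠ 0) (hq : Fintype.card F % 4 = 1)
    (a b : F) (ha : a ≠ 0) (hb : b ≠ 0) (hab : a ≠ b) (hab' : a ≠ -b)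
    (hpar : IsSquare (a ^ 2 - b ^ 2)) :
    ∀ lam' ∈ ({b ^ 2 / a ^ 2, 1 / (b ^ 2 / a ^ 2), 1 - b ^ 2 / a ^ 2,
        1 / (1 - b ^ 2 / a ^ 2), (b ^ 2 / a ^ 2) / (b ^ 2 / a ^ 2 - 1),
        (b ^ 2 / a ^ 2 - 1) / (b ^ 2 / a ^ 2)} : Set F),
      ∃ c d : F, c ≠ 0 ∧ d ≠ 0 ∧ c ≠ d ∧ c ≠ -d ∧ d ^ 2 / c ^ 2 = lam' ∧
        IsSquare (c ^ 2 - d ^ 2) := by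
  obtain ⟨s, hs⟩ := hpar
  have hi : IsSquare (-1 : F) := by
    rw [FiniteField.isSquare_neg_one_iff]; omega
  obtain ⟨i, hi⟩ := hi
  have hs2 : s ^ 2 = a ^ 2 - b ^ 2 := by rw [sq]; exact hs.symm
  have hi2 : i ^ 2 = -1 := by rw [sq]; exact hi.symm
  have hsub : a ^ 2 - b ^ 2 ≠ 0 := by
    intro h
    rcases mul_eq_zero.mp (show (a - b) * (a + b) = 0 by linear_combination h) with h' | h'
    · exact hab (sub_eq_zero.mp h')
    · exact hab' (eq_neg_of_add_eq_zero_left h')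
  have hba : b ^ 2 - a ^ 2 ≠ 0 := fun h => hsub (by linear_combination -h)
  have hs0 : s ≠ 0 := by
    intro h; apply hsub; rw [← hs2, h]; ring
  have hi0 : i ≠ 0 := by
    intro h; rw [h] at hi2; simp at hi2
  have ha2 : a ^ 2 ≠ 0 := pow_ne_zero 2 ha
  have hb2 : b ^ 2 ≠ 0 := pow_ne_zero 2 hb
  have hc2 : (i * s) ^ 2 = b ^ 2 - a ^ 2 := by
    linear_combination s ^ 2 * hi2 - hs2
  have key : ∀ c d : F, c ^ 2 ≠ d ^ 2 → c ≠ d ∧ c ≠ -d := by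
    intro c d h
    exact ⟨fun h' => h (by rw [h']), fun h' => h (by rw [h']; ring)⟩
  have hcase3 : s ^ 2 / a ^ 2 = 1 - b ^ 2 / a ^ 2 := by
    rw [hs2, sub_div, div_self ha2]
  rintro lam' (rfl | rfl | rfl | rfl | rfl | rfl)
  · exact ⟨a, b, ha, hb, hab, hab', rfl, ⟨s, hs⟩⟩
  · refine ⟨b, a, hb, ha, fun h => hab h.symm, ?_, ?_, ⟨i * s, ?_⟩⟩
    · intro h; exact hab' (by rw [h]; ring)
    · rw [one_div, inv_div]
    · linear_combination hs2 - s ^ 2 * hi2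
  · have hne : a ^ 2 ≠ s ^ 2 := by
      intro h; exact hb2 (by linear_combination h + hs2)
    obtain ⟨h1, h2'⟩ := key a s hne
    exact ⟨a, s, ha, hs0, h1, h2', hcase3, ⟨b, by linear_combination -hs2⟩⟩
  · have hne : s ^ 2 ≠ a ^ 2 := by
      intro h; exact hb2 (by linear_combination hs2 - h)
    obtain ⟨h1, h2'⟩ := key s a hne
    refine ⟨s, a, hs0, ha, h1, h2', ?_, ⟨i * b, ?_⟩⟩
    · rw [← hcase3, one_div, inv_div]
    · linear_combination hs2 - b ^ 2 * hi2
  · have hne : (i * s) ^ 2 ≠ b ^ 2 := by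
      rw [hc2]; intro h; exact ha2 (by linear_combination -h)
    obtain ⟨h1, h2'⟩ := key (i * s) b hne
    refine ⟨i * s, b, mul_ne_zero hi0 hs0, hb, h1, h2', ?_, ⟨i * a, ?_⟩⟩
    · rw [hc2]
      have hd : b ^ 2 / a ^ 2 - 1 ≠ 0 := by
        intro h
        have h' : b ^ 2 / a ^ 2 = 1 := sub_eq_zero.mp h
        field_simp at h'
        exact hba (sub_eq_zero.mpr h')
      field_simp
    · rw [hc2]; linear_combination -a ^ 2 * hi2
  · have hne : b ^ 2 ≠ (i * s) ^ 2 := by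
      rw [hc2]; intro h; exact ha2 (by linear_combination h)
    obtain ⟨h1, h2'⟩ := key b (i * s) hne
    refine ⟨b, i * s, hb, mul_ne_zero hi0 hs0, h1, h2', ?_, ⟨a, ?_⟩⟩
    · rw [hc2]; field_simp
    · rw [hc2]; ring
end

section
/- Let q ≡ 5 (mod 8) be a prime power and let a₀, b₀ ∈ 𝔽_q be nonzero with a₀ ≠ ±b₀, such that a₀b₀ is a square (so (a₀,b₀) has children) and a₀² − b₀² is a square with square root s (so (a₀,b₀) has parents (a₀+s, a₀−s)). Let (a₋₁,b₋₁) = (a₀+s, a₀−s) and (a₋₁',b₋₁') = (b₀+is', b₀−is') where (is')² = b₀² − a₀². Then exactly one of 4a₀s = a₋₁² − b₋₁² and 4b₀(is') = (a₋₁')² − (b₋₁')² is a square in 𝔽_q; i.e. exactly one of (a₋₁,b₋₁) and (a₋₁',b₋₁') has a parent. -/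
private lemma nonsq_of_sq_eq_neg_one {F : Type*} [Field F] [Fintype F]
    (h2 : (2 : F) ≠ 0) (hq : Fintype.card F % 8 = 5)
    (i : F) (hi : i ^ 2 = -1) : ¬ IsSquare i := by
  rintro ⟨j, rfl⟩
  have hj : j ≠ 0 := by
    rintro rfl
    apply h2
    linear_combination 2 * hi
  have hcard : Fintype.card F - 1 = 4 * (2 * (Fintype.card F / 8) + 1) := by
    have := Fintype.card_pos (α := F)
    omega
  have h1 := FiniteField.pow_card_sub_one_eq_one j hj
  rw [hcard, pow_mul] at h1
  have hj4 : j ^ 4 = -1 := by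
    have h4 : j ^ 4 = (j * j) ^ 2 := by ring
    rw [h4, hi]
  rw [hj4] at h1
  have hodd : ((-1 : F)) ^ (2 * (Fintype.card F / 8) + 1) = -1 :=
    Odd.neg_one_pow ⟨_, by ring⟩
  rw [hodd] at h1
  exact h2 (by linear_combination -h1)

/-- Over `𝔽_q` with `q ≡ 5 (mod 8)`, let `(a₀, b₀)` have children
(`a₀b₀` square) and parents `(a₀+s, a₀-s)` (with `s² = a₀² - b₀²`), and let
`(b₀+t, b₀-t)` (with `t² = b₀² - a₀²`) be the parents of the sibling `(b₀, a₀)`.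
Then exactly one of `4a₀s = (a₀+s)² - (a₀-s)²` and `4b₀t = (b₀+t)² - (b₀-t)²` is a square
in `𝔽_q`; i.e. exactly one of the two parents itself has a parent. -/
theorem exactly_one_grandparent {F : Type*} [Field F] [Fintype F]
    (h2 : (2 : F) ≠ 0) (hq : Fintype.card F % 8 = 5)
    (a₀ b₀ : F) (ha : a₀ ≠ 0) (hb : b₀ ≠ 0) (hab : a₀ ≠ b₀) (hab' : a₀ ≠ -b₀)
    (hchild : IsSquare (a₀ * b₀))
    (s : F) (hs : s ^ 2 = a₀ ^ 2 - b₀ ^ 2)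
    (t : F) (ht : t ^ 2 = b₀ ^ 2 - a₀ ^ 2) :
    Xor' (IsSquare (4 * a₀ * s)) (IsSquare (4 * b₀ * t)) := by
  letI := Classical.decEq F
  have h4 : (4 : F) ≠ 0 := by
    intro h; apply h2; have : (2 : F) * 2 = 0 := by linear_combination h
    rcases mul_eq_zero.mp this with h | h <;> exact h
  have hsum : a₀ + b₀ ≠ 0 := fun h => hab' (by linear_combination h)
  have hdiff : a₀ - b₀ ≠ 0 := sub_ne_zero.mpr hab
  have hs2 : s ^ 2 ≠ 0 := by
    rw [hs]
    have : a₀ ^ 2 - b₀ ^ 2 = (a₀ - b₀) * (a₀ + b₀) := by ring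
    rw [this]; exact mul_ne_zero hdiff hsum
  have hs0 : s ≠ 0 := fun h => hs2 (by rw [h]; ring)
  have ht0 : t ≠ 0 := by
    intro h
    apply hs2
    rw [hs]
    have : t ^ 2 = 0 := by rw [h]; ring
    rw [ht] at this
    linear_combination -this
  have hA : 4 * a₀ * s ≠ 0 := mul_ne_zero (mul_ne_zero h4 ha) hs0
  have hB : 4 * b₀ * t ≠ 0 := mul_ne_zero (mul_ne_zero h4 hb) ht0
  set c : F := 16 * (a₀ * b₀) * s ^ 2 with hc_def
  have hc : c ≠ 0 := by
    have h16 : (16 : F) ≠ 0 := by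
      intro h; apply h4
      have h44 : (4 : F) * 4 = 0 := by linear_combination h
      rcases mul_eq_zero.mp h44 with h' | h' <;> exact h'
    exact mul_ne_zero (mul_ne_zero h16 (mul_ne_zero ha hb)) hs2
  have key : (4 * a₀ * s * (4 * b₀ * t)) ^ 2 = -c ^ 2 := by
    rw [hc_def]
    linear_combination (256 * a₀ ^ 2 * b₀ ^ 2 * s ^ 2) * ht +
      (256 * a₀ ^ 2 * b₀ ^ 2 * s ^ 2) * hs
  -- the product is not a square
  have hnotsq : ¬ IsSquare (4 * a₀ * s * (4 * b₀ * t)) := by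
    rintro ⟨r, hr⟩
    obtain ⟨w, hw⟩ := hchild
    have hw0 : w ≠ 0 := by
      intro h; apply mul_ne_zero ha hb; rw [hw, h]; ring
    have hcw : c = (4 * w * s) * (4 * w * s) := by
      rw [hc_def]; linear_combination (16 * s ^ 2) * hw
    have hws : (4 : F) * w * s ≠ 0 := mul_ne_zero (mul_ne_zero h4 hw0) hs0
    set i : F := 4 * a₀ * s * (4 * b₀ * t) * c⁻¹ with hi_def
    have hi : i ^ 2 = -1 := by
      rw [hi_def, mul_pow, key, inv_pow]
      field_simp
    apply nonsq_of_sq_eq_neg_one h2 hq i hi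
    refine ⟨r * (4 * w * s)⁻¹, ?_⟩
    rw [hi_def, hr, hcw, mul_inv]
    ring
  have hmul : quadraticChar F (4 * a₀ * s) * quadraticChar F (4 * b₀ * t) = -1 := by
    rw [← map_mul]
    exact quadraticChar_neg_one_iff_not_isSquare.mpr hnotsq
  rcases quadraticChar_dichotomy hA with h | h
  · left
    refine ⟨(quadraticChar_one_iff_isSquare hA).mp h, ?_⟩
    rw [← quadraticChar_one_iff_isSquare hB]
    rw [h, one_mul] at hmul
    omega
  · right
    constructor
    · rw [← quadraticChar_one_iff_isSquare hB]
      rw [h] at hmul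
      omega
    · rw [← quadraticChar_one_iff_isSquare hA]
      omega
end

section
/- Let q ≡ 1 (mod 4) be a prime power and (a,b) ∈ 𝔽_q² with a, b ≠ 0, a ≠ ±b, and λ = b²/a². Then (a,b) has a parent in the AGM graph (i.e. a² − b² ∈ 𝔽_q^{×2}) if and only if the full 4-torsion of E_λ is rational: E_λ[4] ⊆ E_λ(𝔽_q), where E_λ : y² = x(x−1)(x−λ). -/
/-- The Legendre-form elliptic curve `y² = x(x-1)(x-λ)`, i.e. the Weierstrass curve
`y² = x³ - (1+λ)x² + λx`. -/
def LegendreCurve {K : Type*} [CommRing K] (lam : K) : WeierstrassCurve K :=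
  ⟨0, -(1 + lam), 0, lam, 0⟩

namespace AGM16

open WeierstrassCurve WeierstrassCurve.Affine WeierstrassCurve.Affine.Point

open Classical

variable {F : Type*} [Field F]

lemma leg_a₁ (lam : F) : (LegendreCurve lam).toAffine.a₁ = 0 := rfl
lemma leg_a₂ (lam : F) : (LegendreCurve lam).toAffine.a₂ = -(1 + lam) := rfl
lemma leg_a₃ (lam : F) : (LegendreCurve lam).toAffine.a₃ = 0 := rfl
lemma leg_a₄ (lam : F) : (LegendreCurve lam).toAffine.a₄ = lam := rfl
lemma leg_a₆ (lam : F) : (LegendreCurve lam).toAffine.a₆ = 0 := rfl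

lemma leg_equation {lam x y : F} :
    (LegendreCurve lam).toAffine.Equation x y ↔ y ^ 2 = x * (x - 1) * (x - lam) := by
  rw [WeierstrassCurve.Affine.equation_iff, leg_a₁, leg_a₂, leg_a₃, leg_a₄, leg_a₆]
  constructor <;> intro h <;> linear_combination h

lemma leg_negY {lam : F} (x y : F) : (LegendreCurve lam).toAffine.negY x y = -y := by
  rw [WeierstrassCurve.Affine.negY, leg_a₁, leg_a₃]; ring

lemma leg_nonsingular_of_y_ne {lam x y : F} (h2 : (2 : F) ≠ 0)
    (heq : (LegendreCurve lam).toAffine.Equation x y) (hy : y ≠ 0) :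
    (LegendreCurve lam).toAffine.Nonsingular x y := by
  rw [WeierstrassCurve.Affine.nonsingular_iff]
  refine ⟨heq, Or.inr ?_⟩
  rw [leg_a₁, leg_a₃]
  intro hc
  have h2y : 2 * y = 0 := by linear_combination hc
  rcases mul_eq_zero.mp h2y with h | h
  · exact h2 h
  · exact hy h

lemma leg_nonsingular_two_tor {lam x : F}
    (heq : (LegendreCurve lam).toAffine.Equation x 0)
    (hd : 3 * x ^ 2 - 2 * (1 + lam) * x + lam ≠ 0) :
    (LegendreCurve lam).toAffine.Nonsingular x 0 := by
  rw [WeierstrassCurve.Affine.nonsingular_iff]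
  refine ⟨heq, Or.inl ?_⟩
  rw [leg_a₁, leg_a₂, leg_a₄]
  intro hc
  exact hd (by linear_combination -hc)

lemma some_eq_some {W : WeierstrassCurve.Affine F} {x₁ y₁ x₂ y₂ : F} {h₁ : W.Nonsingular x₁ y₁}
    {h₂ : W.Nonsingular x₂ y₂} (hx : x₁ = x₂) (hy : y₁ = y₂) :
    Point.some _ _ h₁ = Point.some _ _ h₂ := by subst hx; subst hy; rfl

def pointRepr {W : WeierstrassCurve.Affine F} : W.Point → Option (F × F)
  | .zero => none
  | @Point.some _ _ _ x y _ => some (x, y)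

lemma some_inj {W : WeierstrassCurve.Affine F} {x₁ y₁ x₂ y₂ : F} {h₁ : W.Nonsingular x₁ y₁}
    {h₂ : W.Nonsingular x₂ y₂} (h : Point.some _ _ h₁ = Point.some _ _ h₂) : x₁ = x₂ ∧ y₁ = y₂ := by
  have := congrArg pointRepr h
  simpa [pointRepr] using this

lemma pointRepr_injective {W : WeierstrassCurve.Affine F} :
    Function.Injective (pointRepr (W := W)) := by
  rintro (_ | @⟨x₁, y₁, h₁⟩) (_ | @⟨x₂, y₂, h₂⟩) h
  · rfl
  · simp [pointRepr] at h
  · simp [pointRepr] at h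
  · simp only [pointRepr, Option.some.injEq, Prod.mk.injEq] at h
    exact some_eq_some h.1 h.2

lemma pointFinite [Fintype F] {W : WeierstrassCurve.Affine F} : Finite W.Point :=
  Finite.of_injective (pointRepr (W := W)) pointRepr_injective

lemma leg_slope {lam x y : F} (hyy : y ≠ -y) :
    (LegendreCurve lam).toAffine.slope x x y y
      = (3 * x ^ 2 - 2 * (1 + lam) * x + lam) / (2 * y) := by
  rw [WeierstrassCurve.Affine.slope_of_Y_ne rfl (by rw [leg_negY]; exact hyy), leg_negY,
    leg_a₁, leg_a₂, leg_a₄]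
  congr 1 <;> ring

lemma leg_two_smul {lam x y X Y : F} (h2 : (2 : F) ≠ 0)
    (h : (LegendreCurve lam).toAffine.Nonsingular x y)
    (h' : (LegendreCurve lam).toAffine.Nonsingular X Y) (hy : y ≠ 0)
    (hX : X * (2 * y) ^ 2
      = (3 * x ^ 2 - 2 * (1 + lam) * x + lam) ^ 2 + ((1 + lam) - 2 * x) * (2 * y) ^ 2)
    (hY : Y * (2 * y)
      = -((3 * x ^ 2 - 2 * (1 + lam) * x + lam) * (X - x) + 2 * y ^ 2)) :
    (2 : ℤ) • Point.some _ _ h = Point.some _ _ h' := by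
  have hyy : y ≠ -y := fun hc => by
    rcases mul_eq_zero.mp (show 2 * y = 0 by linear_combination hc) with h' | h'
    exacts [h2 h', hy h']
  have hy' : y ≠ (LegendreCurve lam).toAffine.negY x y := by rw [leg_negY]; exact hyy
  have h2y : (2 : F) * y ≠ 0 := fun hc => by
    rcases mul_eq_zero.mp hc with h' | h'; exacts [h2 h', hy h']
  rw [two_zsmul, WeierstrassCurve.Affine.Point.add_self_of_Y_ne hy']
  have hXdiv : (LegendreCurve lam).toAffine.addX x x
      ((LegendreCurve lam).toAffine.slope x x y y) = X := by
    simp only [WeierstrassCurve.Affine.addX, leg_slope hyy, leg_a₁, leg_a₂]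
    field_simp
    linear_combination -hX
  refine some_eq_some hXdiv ?_
  simp only [WeierstrassCurve.Affine.addY, WeierstrassCurve.Affine.negAddY, hXdiv]
  simp only [WeierstrassCurve.Affine.negY, leg_a₁, leg_a₃, leg_slope hyy]
  field_simp
  linear_combination -hY

lemma leg_two_tor_smul {lam x : F} (h : (LegendreCurve lam).toAffine.Nonsingular x 0) :
    (2 : ℤ) • Point.some _ _ h = 0 := by
  rw [two_zsmul]
  exact WeierstrassCurve.Affine.Point.add_self_of_Y_eq (by rw [leg_negY]; ring)

lemma leg_two_smul_eq_zero_iff {lam : F} (h2 : (2 : F) ≠ 0)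
    (h0 : (LegendreCurve lam).toAffine.Nonsingular 0 0)
    (h1 : (LegendreCurve lam).toAffine.Nonsingular 1 0)
    (hl : (LegendreCurve lam).toAffine.Nonsingular lam 0)
    (P : (LegendreCurve lam).toAffine.Point) :
    (2 : ℤ) • P = 0 ↔ P = 0 ∨ P = Point.some _ _ h0 ∨ P = Point.some _ _ h1 ∨ P = Point.some _ _ hl := by
  constructor
  · intro hP
    rcases P with _ | @⟨x, y, hxy⟩
    · exact Or.inl rfl
    rcases eq_or_ne y ((LegendreCurve lam).toAffine.negY x y) with hy | hy
    · rw [leg_negY] at hy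
      have hy0 : y = 0 := by
        rcases mul_eq_zero.mp (show 2 * y = 0 by linear_combination hy) with h' | h'
        exacts [absurd h' h2, h']
      subst hy0
      have heq := leg_equation.mp hxy.1
      have hx : x * (x - 1) * (x - lam) = 0 := by linear_combination -heq
      rcases mul_eq_zero.mp hx with hx' | hx'
      · rcases mul_eq_zero.mp hx' with hx'' | hx''
        · exact Or.inr (Or.inl (some_eq_some hx'' rfl))
        · exact Or.inr (Or.inr (Or.inl (some_eq_some (by linear_combination hx'') rfl)))
      · exact Or.inr (Or.inr (Or.inr (some_eq_some (by linear_combination hx') rfl)))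
    · rw [two_zsmul, WeierstrassCurve.Affine.Point.add_self_of_Y_ne hy] at hP
      exact absurd hP (WeierstrassCurve.Affine.Point.some_ne_zero _)
  · rintro (rfl | rfl | rfl | rfl)
    · exact smul_zero _
    all_goals exact leg_two_tor_smul _

lemma leg_T1_add_Tl {lam : F} (hl1 : lam ≠ 1)
    (h0 : (LegendreCurve lam).toAffine.Nonsingular 0 0)
    (h1 : (LegendreCurve lam).toAffine.Nonsingular 1 0)
    (hl : (LegendreCurve lam).toAffine.Nonsingular lam 0) :
    Point.some _ _ h1 + Point.some _ _ hl = Point.some _ _ h0 := by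
  have hx : (1 : F) ≠ lam := fun hc => hl1 hc.symm
  rw [WeierstrassCurve.Affine.Point.add_of_X_ne hx]
  have hs : (LegendreCurve lam).toAffine.slope 1 lam 0 0 = 0 := by
    rw [WeierstrassCurve.Affine.slope_of_X_ne hx]; simp
  have hX : (LegendreCurve lam).toAffine.addX 1 lam
      ((LegendreCurve lam).toAffine.slope 1 lam 0 0) = 0 := by
    simp only [WeierstrassCurve.Affine.addX, hs, leg_a₁, leg_a₂]; ring
  refine some_eq_some hX ?_
  simp only [WeierstrassCurve.Affine.addY, WeierstrassCurve.Affine.negAddY,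
    WeierstrassCurve.Affine.negY, leg_a₁, leg_a₃, hX, hs]
  ring

lemma half_one {lam t : F} (h2 : (2 : F) ≠ 0) (ht : t ^ 2 = 1 - lam) (ht0 : t ≠ 0)
    (ht1 : 1 + t ≠ 0) (hT : (LegendreCurve lam).toAffine.Nonsingular 1 0) :
    ∃ P : (LegendreCurve lam).toAffine.Point, (2 : ℤ) • P = Point.some _ _ hT := by
  have heq : (LegendreCurve lam).toAffine.Equation (1 + t) (t * (1 + t)) :=
    leg_equation.mpr (by linear_combination (t + t ^ 2) * ht)
  have hy0 : t * (1 + t) ≠ 0 := mul_ne_zero ht0 ht1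
  have hP := leg_nonsingular_of_y_ne h2 heq hy0
  refine ⟨Point.some _ _ hP, leg_two_smul h2 hP hT hy0 ?_ ?_⟩
  · linear_combination ((1 : F) + 8 * t + 15 * t ^ 2 + 8 * t ^ 3 - lam - 4 * lam * t
      - 4 * lam * t ^ 2) * ht
  · linear_combination (t + 2 * t ^ 2) * ht

lemma half_lam {lam u w : F} (h2 : (2 : F) ≠ 0) (hu : u ^ 2 = lam ^ 2 - lam)
    (hw : lam * w ^ 2 = 1) (hu0 : u ≠ 0) (hx0 : lam + u ≠ 0) (hw0 : w ≠ 0)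
    (hT : (LegendreCurve lam).toAffine.Nonsingular lam 0) :
    ∃ P : (LegendreCurve lam).toAffine.Point, (2 : ℤ) • P = Point.some _ _ hT := by
  have heq : (LegendreCurve lam).toAffine.Equation (lam + u) (u * (lam + u) * w) :=
    leg_equation.mpr (by
      linear_combination ((1 : F) - u + u^2*w^2 - 2*lam - lam*w^2 + 2*lam*u*w^2
        + 2*lam^2*w^2) * hu + (lam - 2*lam*u - 3*lam^2 + 2*lam^2*u + 2*lam^3) * hw)
  have hy0 : u * (lam + u) * w ≠ 0 := mul_ne_zero (mul_ne_zero hu0 hx0) hw0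
  have hP := leg_nonsingular_of_y_ne h2 heq hy0
  refine ⟨Point.some _ _ hP, leg_two_smul h2 hP hT hy0 ?_ ?_⟩
  · linear_combination ((-4 : F) + 12*u - 9*u^2 - 4*u^2*w^2 + 8*u^3*w^2 + 31*lam + 4*lam*w^2
      - 24*lam*u - 16*lam*u*w^2 + 24*lam*u^2*w^2 - 31*lam^2 - 32*lam^2*w^2 + 32*lam^2*u*w^2
      + 32*lam^3*w^2) * hu + ((-4 : F)*lam + 16*lam*u + 36*lam^2 - 48*lam^2*u - 64*lam^3
      + 32*lam^3*u + 32*lam^4) * hw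
  · linear_combination ((2 : F) - 3*u + 2*u^2*w^2 - 4*lam - 2*lam*w^2 + 4*lam*u*w^2
      + 4*lam^2*w^2) * hu + ((2 : F)*lam - 4*lam*u - 6*lam^2 + 4*lam^2*u + 4*lam^3) * hw

lemma leg_double_eq_T1 {lam x y : F} (h2 : (2 : F) ≠ 0)
    {h : (LegendreCurve lam).toAffine.Nonsingular x y}
    {h1 : (LegendreCurve lam).toAffine.Nonsingular 1 0}
    (hd : (2 : ℤ) • Point.some _ _ h = Point.some _ _ h1) : (x - 1) ^ 2 = 1 - lam := by
  have hy' : y ≠ (LegendreCurve lam).toAffine.negY x y := by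
    intro hc
    rw [two_zsmul, WeierstrassCurve.Affine.Point.add_self_of_Y_eq hc] at hd
    exact (WeierstrassCurve.Affine.Point.some_ne_zero h1) hd.symm
  have hyy : y ≠ -y := by rwa [leg_negY] at hy'
  have hy : y ≠ 0 := fun hc => hyy (by rw [hc]; ring)
  have h2y : (2 : F) * y ≠ 0 := fun hc => by
    rcases mul_eq_zero.mp hc with h' | h'; exacts [h2 h', hy h']
  rw [two_zsmul, WeierstrassCurve.Affine.Point.add_self_of_Y_ne hy'] at hd
  have hX := (some_inj hd).1
  simp only [WeierstrassCurve.Affine.addX, leg_slope hyy, leg_a₁, leg_a₂] at hX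
  have heq := leg_equation.mp h.1
  have hX' : (3 * x ^ 2 - 2 * (1 + lam) * x + lam) ^ 2
      = (2 * x - lam) * (2 * y) ^ 2 := by
    field_simp at hX
    linear_combination hX
  have key : ((x - 1) ^ 2 - (1 - lam)) ^ 2 = 0 := by
    linear_combination hX' + (8 * x - 4 * lam) * heq
  have := pow_eq_zero_iff (n := 2) (by norm_num) |>.mp key
  linear_combination this

lemma card_iff_halves {F : Type*} [Field F] [Fintype F] {lam : F} (h2 : (2 : F) ≠ 0)
    (hl0 : lam ≠ 0) (hl1 : lam ≠ 1)
    (h0 : (LegendreCurve lam).toAffine.Nonsingular 0 0)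
    (h1 : (LegendreCurve lam).toAffine.Nonsingular 1 0)
    (hl : (LegendreCurve lam).toAffine.Nonsingular lam 0) :
    Nat.card {P : (LegendreCurve lam).toAffine.Point // (4 : ℤ) • P = 0} = 16 ↔
      ((∃ P : (LegendreCurve lam).toAffine.Point, (2 : ℤ) • P = Point.some _ _ h0) ∧
       (∃ P : (LegendreCurve lam).toAffine.Point, (2 : ℤ) • P = Point.some _ _ h1) ∧
       (∃ P : (LegendreCurve lam).toAffine.Point, (2 : ℤ) • P = Point.some _ _ hl)) := by
  classical
  haveI : Finite (LegendreCurve lam).toAffine.Point := pointFinite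
  set G := (LegendreCurve lam).toAffine.Point with hG
  let f4 : G →+ G := AddMonoidHom.mk' (fun P => (4 : ℤ) • P) (fun P Q => smul_add _ P Q)
  let H : AddSubgroup G := f4.ker
  have hmemH : ∀ P : G, P ∈ H ↔ (4 : ℤ) • P = 0 := fun P => AddMonoidHom.mem_ker
  let f2 : G →+ G := AddMonoidHom.mk' (fun P => (2 : ℤ) • P) (fun P Q => smul_add _ P Q)
  let φ : H →+ G := f2.comp H.subtype
  have hφ : ∀ P : H, φ P = (2 : ℤ) • (P : G) := fun P => rfl
  have hcard0 : Nat.card {P : G // (4 : ℤ) • P = 0} = Nat.card H :=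
    Nat.card_congr (Equiv.subtypeEquivRight fun P => (hmemH P).symm)
  set S : Set G := {0, Point.some _ _ h0, Point.some _ _ h1, Point.some _ _ hl} with hS
  have htor := leg_two_smul_eq_zero_iff h2 h0 h1 hl
  have hmemS : ∀ P : G, (2 : ℤ) • P = 0 ↔ P ∈ S := fun P => (htor P).trans (by simp [hS])
  have hS4 : S.ncard = 4 := by
    have n1 : (Point.some _ _ h1 : G) ≠ Point.some _ _ hl := fun hc => hl1 ((some_inj hc).1).symm
    have n2 : (Point.some _ _ h0 : G) ∉ ({Point.some _ _ h1, Point.some _ _ hl} : Set G) := by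
      simp only [Set.mem_insert_iff, Set.mem_singleton_iff]
      push_neg
      exact ⟨fun hc => one_ne_zero ((some_inj hc).1).symm,
        fun hc => hl0 ((some_inj hc).1).symm⟩
    have n3 : (0 : G) ∉ ({Point.some _ _ h0, Point.some _ _ h1, Point.some _ _ hl} : Set G) := by
      simp only [Set.mem_insert_iff, Set.mem_singleton_iff]
      push_neg
      refine ⟨?_, ?_, ?_⟩ <;> exact Ne.symm (WeierstrassCurve.Affine.Point.some_ne_zero _)
    rw [hS, Set.ncard_insert_of_notMem n3, Set.ncard_insert_of_notMem n2, Set.ncard_pair n1]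
  have h22 : ((2 : ℤ) * 2) = 4 := by norm_num
  have hker : Nat.card φ.ker = 4 := by
    have e1 : φ.ker ≃ {Q : G // (2 : ℤ) • Q = 0} :=
      { toFun := fun P => ⟨((P : H) : G), P.2⟩
        invFun := fun Q => ⟨⟨Q.1, (hmemH Q.1).mpr (by
            rw [← h22, ← smul_smul, Q.2, smul_zero])⟩, Q.2⟩
        left_inv := fun _ => rfl
        right_inv := fun _ => rfl }
    rw [Nat.card_congr e1, Nat.card_congr (Equiv.subtypeEquivRight hmemS),
      Nat.card_coe_set_eq, hS4]
  have hrange_sub : (φ.range : Set G) ⊆ S := by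
    intro Q hQ
    obtain ⟨P, rfl⟩ := AddMonoidHom.mem_range.mp hQ
    refine (hmemS _).mp ?_
    rw [hφ, smul_smul, h22]
    exact (hmemH _).mp P.2
  have hmain : Nat.card H = Nat.card φ.range * 4 := by
    rw [AddSubgroup.card_eq_card_quotient_mul_card_addSubgroup φ.ker,
      Nat.card_congr (QuotientAddGroup.quotientKerEquivRange φ).toEquiv, hker]
  have hrangecard : Nat.card φ.range = ((φ.range : Set G)).ncard := by
    rw [← Nat.card_coe_set_eq]
    rfl
  constructor
  · intro h16
    rw [hcard0, hmain] at h16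
    have hr4 : ((φ.range : Set G)).ncard = 4 := by
      rw [← hrangecard]; omega
    have heqS : (φ.range : Set G) = S :=
      Set.eq_of_subset_of_ncard_le hrange_sub (by rw [hr4, hS4]) (Set.toFinite S)
    have get : ∀ T : G, T ∈ S → ∃ P : G, (2 : ℤ) • P = T := by
      intro T hT
      rw [← heqS] at hT
      obtain ⟨P, hP⟩ := AddMonoidHom.mem_range.mp hT
      exact ⟨(P : G), hP⟩
    exact ⟨get _ (by simp [hS]), get _ (by simp [hS]), get _ (by simp [hS])⟩
  · rintro ⟨⟨P0, hP0⟩, ⟨P1, hP1⟩, ⟨Pl, hPl⟩⟩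
    have hmem : ∀ (P T : G), (2 : ℤ) • P = T → (2 : ℤ) • T = 0 → P ∈ H := by
      intro P T hPT hT
      rw [hmemH, ← h22, ← smul_smul, hPT, hT]
    have h2tor : ∀ {x : F} (h : (LegendreCurve lam).toAffine.Nonsingular x 0),
        (2 : ℤ) • (Point.some _ _ h : G) = 0 := fun h => leg_two_tor_smul h
    have hrange_eq : (φ.range : Set G) = S := by
      refine subset_antisymm hrange_sub ?_
      intro Q hQ
      simp only [hS, Set.mem_insert_iff, Set.mem_singleton_iff] at hQ
      rcases hQ with rfl | rfl | rfl | rfl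
      · exact ⟨0, map_zero φ⟩
      · exact ⟨⟨P0, hmem _ _ hP0 (h2tor h0)⟩, hP0⟩
      · exact ⟨⟨P1, hmem _ _ hP1 (h2tor h1)⟩, hP1⟩
      · exact ⟨⟨Pl, hmem _ _ hPl (h2tor hl)⟩, hPl⟩
    rw [hcard0, hmain, hrangecard, hrange_eq, hS4]

end AGM16


open WeierstrassCurve.Affine WeierstrassCurve.Affine.Point AGM16

open Classical in
/-- Over `𝔽_q` with `q ≡ 1 (mod 4)`, the point `(a, b)` has a parent in the
AGM graph (`a² - b²` is a nonzero square) iff the full 4-torsion of `E_λ` (`λ = b²/a²`) is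
rational, i.e. `E_λ(𝔽_q)` contains all sixteen 4-torsion points. -/
theorem parent_iff_four_torsion_rational {F : Type*} [Field F] [Fintype F]
    (h2 : (2 : F) ≠ 0) (hq : Fintype.card F % 4 = 1)
    (a b : F) (ha : a ≠ 0) (hb : b ≠ 0) (hab : a ≠ b) (hab' : a ≠ -b) :
    (∃ s : F, s ≠ 0 ∧ a ^ 2 - b ^ 2 = s ^ 2) ↔
      Nat.card {P : (LegendreCurve (b ^ 2 / a ^ 2)).toAffine.Point // (4 : ℤ) • P = 0}
        = 16 := by
  classical
  set lam : F := b ^ 2 / a ^ 2 with hlam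
  have ha2 : a ^ 2 ≠ 0 := pow_ne_zero 2 ha
  have hb2 : b ^ 2 ≠ 0 := pow_ne_zero 2 hb
  have hab2 : a ^ 2 - b ^ 2 ≠ 0 := by
    intro hc
    rcases mul_eq_zero.mp (show (a - b) * (a + b) = 0 by linear_combination hc) with h | h
    · exact hab (by linear_combination h)
    · exact hab' (by linear_combination h)
  have hl0 : lam ≠ 0 := div_ne_zero hb2 ha2
  have hl1 : lam ≠ 1 := by
    rw [hlam]
    intro hc
    rw [div_eq_one_iff_eq ha2] at hc
    exact hab2 (by linear_combination -hc)
  obtain ⟨i, hi⟩ : ∃ i : F, i ^ 2 = -1 := by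
    obtain ⟨r, hr⟩ := (FiniteField.isSquare_neg_one_iff (F := F)).mpr (by omega)
    exact ⟨r, by rw [hr]; ring⟩
  have e0 : (LegendreCurve lam).toAffine.Equation 0 0 := leg_equation.mpr (by ring)
  have e1 : (LegendreCurve lam).toAffine.Equation 1 0 := leg_equation.mpr (by ring)
  have el : (LegendreCurve lam).toAffine.Equation lam 0 := leg_equation.mpr (by ring)
  have h0 : (LegendreCurve lam).toAffine.Nonsingular 0 0 :=
    leg_nonsingular_two_tor e0 (by intro hc; exact hl0 (by linear_combination hc))
  have h1 : (LegendreCurve lam).toAffine.Nonsingular 1 0 :=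
    leg_nonsingular_two_tor e1 (by intro hc; exact hl1 (by linear_combination -hc))
  have hl' : (LegendreCurve lam).toAffine.Nonsingular lam 0 :=
    leg_nonsingular_two_tor el (by
      intro hc
      rcases mul_eq_zero.mp (show lam * (lam - 1) = 0 by linear_combination hc) with h | h
      · exact hl0 h
      · exact hl1 (by linear_combination h))
  rw [card_iff_halves h2 hl0 hl1 h0 h1 hl']
  constructor
  · rintro ⟨s, hs0, hseq⟩
    have ht : (s / a) ^ 2 = 1 - lam := by
      rw [hlam]
      field_simp
      linear_combination -hseq
    have ht0 : s / a ≠ 0 := div_ne_zero hs0 ha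
    have ht1 : 1 + s / a ≠ 0 := by
      intro hc
      have hsa : s = -a := by
        field_simp at hc
        linear_combination hc
      rw [hsa] at hseq
      exact hb2 (by linear_combination -hseq)
    obtain ⟨P1, hP1⟩ := half_one h2 ht ht0 ht1 h1
    have hi0 : i ≠ 0 := by
      intro hc
      rw [hc] at hi
      norm_num at hi
    have hu : (i * b * s / a ^ 2) ^ 2 = lam ^ 2 - lam := by
      rw [hlam]
      have key : (i * b * s) ^ 2 = (b ^ 2) ^ 2 - b ^ 2 * a ^ 2 := by
        linear_combination (b ^ 2 * s ^ 2) * hi + b ^ 2 * hseq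
      field_simp
      linear_combination s ^ 2 * hi + hseq
    have hu0 : i * b * s / a ^ 2 ≠ 0 :=
      div_ne_zero (mul_ne_zero (mul_ne_zero hi0 hb) hs0) ha2
    have hx0 : lam + i * b * s / a ^ 2 ≠ 0 := by
      intro hc
      have hul : i * b * s / a ^ 2 = -lam := by linear_combination hc
      rw [hul] at hu
      exact hl0 (by linear_combination hu)
    have hw : lam * (a / b) ^ 2 = 1 := by
      rw [hlam]
      field_simp
    have hw0 : a / b ≠ 0 := div_ne_zero ha hb
    obtain ⟨Pl, hPl⟩ := half_lam h2 hu hw hu0 hx0 hw0 hl'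
    refine ⟨⟨P1 + Pl, ?_⟩, ⟨P1, hP1⟩, ⟨Pl, hPl⟩⟩
    rw [smul_add, hP1, hPl, leg_T1_add_Tl hl1 h0 h1 hl']
  · rintro ⟨-, ⟨P, hP⟩, -⟩
    rcases P with _ | @⟨x, y, hxy⟩
    · rw [show ((Point.zero : (LegendreCurve lam).toAffine.Point)) = 0 from rfl,
        smul_zero] at hP
      exact absurd hP.symm (WeierstrassCurve.Affine.Point.some_ne_zero _)
    have hx1 : (x - 1) ^ 2 = 1 - lam := leg_double_eq_T1 h2 hP
    have hc : a ^ 2 * (b ^ 2 / a ^ 2) = b ^ 2 := by field_simp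
    have hsq : a ^ 2 - b ^ 2 = (a * (x - 1)) ^ 2 := by
      linear_combination (-(a ^ 2)) * hx1 + hc + a ^ 2 * hlam
    exact ⟨a * (x - 1), fun hc' => hab2 (by rw [hsq, hc']; norm_num), hsq⟩
end

section
/- Let q be a prime power with q ≡ 1 (mod 8), fix a 2-adic square root √q of q in ℤ₂, and let s be an integer with s ≡ ±46·√q (mod 128). Then s² − 4q ≡ 64q (mod 512); consequently s² − 4q = 64·u with u ≡ 1 (mod 8), so s² − 4q is a square in ℚ₂. -/
/-- A 2-adic integer congruent to 1 mod 8 is a square in ℤ_[2]. -/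
lemma sq_of_one_add_eight (u w : ℤ_[2]) (huw : u = 1 + 8 * w) :
    ∃ y : ℤ_[2], y ^ 2 = u := by
  have h2 : ‖(2 : ℤ_[2])‖ = (1/2 : ℝ) := by
    simpa using PadicInt.norm_p (p := 2)
  have h8 : ‖(8 : ℤ_[2]) * w‖ ≤ (1/2 : ℝ) ^ 3 := by
    have e : ((8 : ℤ_[2])) = (2 : ℤ_[2]) ^ 3 := by norm_num
    rw [norm_mul, e, norm_pow, h2]
    have hw : ‖w‖ ≤ 1 := w.norm_le_one
    nlinarith [norm_nonneg w]
  set F : Polynomial ℤ_[2] := Polynomial.X ^ 2 - Polynomial.C u with hF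
  have heval : F.eval 1 = -(8 * w) := by
    simp [hF, huw]
  have hderiv : F.derivative.eval 1 = 2 := by
    simp [hF]
    norm_num
  have hnorm : ‖F.eval 1‖ < ‖F.derivative.eval 1‖ ^ 2 := by
    rw [heval, hderiv, norm_neg, h2]
    calc ‖(8 : ℤ_[2]) * w‖ ≤ (1/2:ℝ)^3 := h8
    _ < (1/2:ℝ)^2 := by norm_num
  obtain ⟨z, hz, -⟩ := hensels_lemma hnorm
  refine ⟨z, ?_⟩
  have : z ^ 2 - u = 0 := by simpa [hF] using hz
  linear_combination this

/-- Let `q ≡ 1 (mod 8)` be a prime power, `√q ∈ ℤ₂` a fixed 2-adic square root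
of `q`, and `s ∈ ℤ` with `s ≡ ±46√q (mod 128)` in `ℤ₂`. Then `s² - 4q ≡ 64q (mod 512)`;
consequently `s² - 4q = 64u` with `u ≡ 1 (mod 8)`, so `s² - 4q` is a square in `ℚ₂`. -/
theorem trace_discriminant_padic_square (q : ℕ) (hq : IsPrimePow q) (hq8 : q % 8 = 1)
    (sqrtq : ℤ_[2]) (hsqrt : sqrtq ^ 2 = (q : ℤ_[2]))
    (s : ℤ)
    (hs : ∃ t : ℤ_[2], (s : ℤ_[2]) = 46 * sqrtq + 128 * t ∨
      (s : ℤ_[2]) = -(46 * sqrtq) + 128 * t) :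
    (∃ t : ℤ_[2], (s : ℤ_[2]) ^ 2 - 4 * q = 64 * q + 512 * t) ∧
      (∃ u : ℤ_[2], (s : ℤ_[2]) ^ 2 - 4 * q = 64 * u ∧ ∃ w : ℤ_[2], u = 1 + 8 * w) ∧
      IsSquare ((s : ℚ_[2]) ^ 2 - 4 * q) := by
  obtain ⟨m, hm⟩ : ∃ m : ℕ, q = 8 * m + 1 := ⟨q / 8, by omega⟩
  have hqc : (q : ℤ_[2]) = 8 * (m : ℤ_[2]) + 1 := by rw [hm]; push_cast; ring
  obtain ⟨t, ht⟩ := hs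
  have key : ∃ t : ℤ_[2],
      (s : ℤ_[2]) ^ 2 = 2116 * q + 11776 * sqrtq * t + 16384 * t ^ 2 := by
    rcases ht with h | h
    · exact ⟨t, by rw [h]; linear_combination 2116 * hsqrt⟩
    · exact ⟨-t, by rw [h]; linear_combination 2116 * hsqrt⟩
  obtain ⟨t, hkey⟩ := key
  refine ⟨⟨4 * q + 23 * sqrtq * t + 32 * t ^ 2, by linear_combination hkey⟩, ?_, ?_⟩
  · refine ⟨33 * q + 184 * sqrtq * t + 256 * t ^ 2, by linear_combination hkey,
      4 + 33 * m + 23 * sqrtq * t + 32 * t ^ 2, ?_⟩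
    linear_combination 33 * hqc
  · obtain ⟨y, hy⟩ := sq_of_one_add_eight (33 * q + 184 * sqrtq * t + 256 * t ^ 2)
      (4 + 33 * m + 23 * sqrtq * t + 32 * t ^ 2) (by linear_combination 33 * hqc)
    have hz : ((s : ℤ_[2])) ^ 2 - 4 * q = (8 * y) ^ 2 := by
      linear_combination hkey - 64 * hy
    refine ⟨((8 * y : ℤ_[2]) : ℚ_[2]), ?_⟩
    rw [← sq]
    have h := congrArg (PadicInt.Coe.ringHom (p := 2)) hz
    simp only [map_sub, map_pow, map_mul, map_ofNat, map_natCast, map_intCast] at h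
    simp [PadicInt.Coe.ringHom] at h
    rw [h]; push_cast; rfl
end

section
/- Let q ≡ 1 (mod 4) be a prime power. Then the number of pairs (a, b) ∈ 𝔽_q² with a, b ≠ 0, a ≠ ±b, and a² − b² a nonzero square in 𝔽_q equals (q−1)(q−5)/2. -/
open Finset

/-- Over `𝔽_q` with `q ≡ 1 (mod 4)`, the number of pairs `(a, b)` with
`a, b ≠ 0`, `a ≠ ±b`, and `a² - b²` a nonzero square equals `(q-1)(q-5)/2`. -/
theorem count_points_with_parent {F : Type*} [Field F] [Fintype F]
    (hq : Fintype.card F % 4 = 1) :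
    Nat.card {p : F × F // p.1 ≠ 0 ∧ p.2 ≠ 0 ∧ p.1 ≠ p.2 ∧ p.1 ≠ -p.2 ∧
        ∃ s : F, s ≠ 0 ∧ p.1 ^ 2 - p.2 ^ 2 = s ^ 2} =
      (Fintype.card F - 1) * (Fintype.card F - 5) / 2 := by
  classical
  set q := Fintype.card F with hqdef
  have h2 : (2 : F) ≠ 0 := by
    apply Ring.two_ne_zero
    rw [Ne, FiniteField.even_card_iff_char_two]
    omega
  have hneg1 : ∃ c : F, c ≠ 0 ∧ c ^ 2 = -1 := by
    obtain ⟨c, hc⟩ := FiniteField.isSquare_neg_one_iff.mpr (show q % 4 ≠ 3 by omega)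
    refine ⟨c, fun h => ?_, by rw [sq]; exact hc.symm⟩
    rw [h, mul_zero] at hc
    exact one_ne_zero (neg_eq_zero.mp hc)
  have hcard : Nat.card {p : F × F // p.1 ≠ 0 ∧ p.2 ≠ 0 ∧ p.1 ≠ p.2 ∧ p.1 ≠ -p.2 ∧
      ∃ s : F, s ≠ 0 ∧ p.1 ^ 2 - p.2 ^ 2 = s ^ 2} =
      (univ.filter (fun p : F × F => p.1 ≠ 0 ∧ p.2 ≠ 0 ∧ p.1 ≠ p.2 ∧ p.1 ≠ -p.2 ∧
        ∃ s : F, s ≠ 0 ∧ p.1 ^ 2 - p.2 ^ 2 = s ^ 2)).card := by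
    rw [Nat.card_eq_fintype_card, Fintype.card_subtype]
  rw [hcard]
  -- change of variables (a,b) ↦ (a+b, a-b)
  have hstep1 : (univ.filter (fun p : F × F => p.1 ≠ 0 ∧ p.2 ≠ 0 ∧ p.1 ≠ p.2 ∧ p.1 ≠ -p.2 ∧
        ∃ s : F, s ≠ 0 ∧ p.1 ^ 2 - p.2 ^ 2 = s ^ 2)).card =
      (univ.filter (fun p : F × F => p.1 ≠ 0 ∧ p.2 ≠ 0 ∧ p.1 ≠ p.2 ∧ p.1 ≠ -p.2 ∧
        ∃ s : F, s ≠ 0 ∧ p.1 * p.2 = s ^ 2)).card := by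
    refine Finset.card_bij' (fun p _ => (p.1 + p.2, p.1 - p.2))
      (fun p _ => ((p.1 + p.2) / 2, (p.1 - p.2) / 2)) ?_ ?_ ?_ ?_
    · rintro ⟨a, b⟩ ha
      simp only [mem_filter, mem_univ, true_and] at ha ⊢
      obtain ⟨ha0, hb0, hab, hab', s, hs0, hs⟩ := ha
      refine ⟨?_, ?_, ?_, ?_, s, hs0, by linear_combination hs⟩
      · intro h; exact hab' (by linear_combination h)
      · intro h; exact hab (by linear_combination h)
      · intro h
        apply hb0
        have h' : 2 * b = 0 := by linear_combination h
        rcases mul_eq_zero.mp h' with h'' | h''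
        · exact absurd h'' h2
        · exact h''
      · intro h
        apply ha0
        have h' : 2 * a = 0 := by linear_combination h
        rcases mul_eq_zero.mp h' with h'' | h''
        · exact absurd h'' h2
        · exact h''
    · rintro ⟨u, v⟩ hu
      simp only [mem_filter, mem_univ, true_and] at hu ⊢
      obtain ⟨hu0, hv0, huv, huv', s, hs0, hs⟩ := hu
      refine ⟨?_, ?_, ?_, ?_, s, hs0, ?_⟩
      · intro h; exact huv' (by field_simp [h2] at h; linear_combination h)
      · intro h; exact huv (by field_simp [h2] at h; linear_combination h)
      · intro h
        apply hv0
        have h' : 2 * v = 0 := by field_simp [h2] at h; linear_combination h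
        rcases mul_eq_zero.mp h' with h'' | h''
        · exact absurd h'' h2
        · exact h''
      · intro h
        apply hu0
        have h' : 2 * u = 0 := by field_simp [h2] at h; linear_combination h
        rcases mul_eq_zero.mp h' with h'' | h''
        · exact absurd h'' h2
        · exact h''
      · field_simp [h2]
        linear_combination 4 * hs
    · rintro ⟨a, b⟩ _
      simp only [Prod.mk.injEq]
      constructor <;> (field_simp [h2]; ring)
    · rintro ⟨u, v⟩ _
      simp only [Prod.mk.injEq]
      constructor <;> (field_simp [h2]; ring)
  rw [hstep1]
  set A : Finset (F × F) := univ.filter (fun p : F × F => p.1 ≠ 0 ∧ p.2 ≠ 0 ∧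
      ∃ s : F, s ≠ 0 ∧ p.1 * p.2 = s ^ 2) with hA
  set U : Finset F := univ.filter (fun x : F => x ≠ 0) with hU
  have hUcard : U.card = q - 1 := by
    rw [hU, Finset.filter_ne', Finset.card_erase_of_mem (mem_univ 0), Finset.card_univ]
  have hTA : (univ.filter (fun p : F × F => p.1 ≠ 0 ∧ p.2 ≠ 0 ∧ p.1 ≠ p.2 ∧ p.1 ≠ -p.2 ∧
        ∃ s : F, s ≠ 0 ∧ p.1 * p.2 = s ^ 2)) =
      A.filter (fun p => p.1 ≠ p.2 ∧ p.1 ≠ -p.2) := by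
    rw [hA, Finset.filter_filter]
    apply Finset.filter_congr
    intro p _
    tauto
  have hDiag : A.filter (fun p => ¬(p.1 ≠ p.2 ∧ p.1 ≠ -p.2)) =
      U.image (fun u => (u, u)) ∪ U.image (fun u => (u, -u)) := by
    ext ⟨u, v⟩
    simp only [hA, hU, Finset.mem_filter, Finset.mem_union, Finset.mem_image,
      Finset.mem_univ, true_and, not_and_or, not_not, Prod.mk.injEq]
    constructor
    · rintro ⟨⟨hu0, hv0, -⟩, h | h⟩
      · exact Or.inl ⟨u, hu0, rfl, h⟩
      · exact Or.inr ⟨u, hu0, rfl, by rw [h]; ring⟩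
    · rintro (⟨w, hw0, rfl, rfl⟩ | ⟨w, hw0, rfl, rfl⟩)
      · exact ⟨⟨hw0, hw0, w, hw0, (sq w).symm⟩, Or.inl rfl⟩
      · obtain ⟨c, hc0, hc⟩ := hneg1
        refine ⟨⟨hw0, neg_ne_zero.mpr hw0, c * w, mul_ne_zero hc0 hw0, ?_⟩, Or.inr (by ring)⟩
        rw [mul_pow, hc]; ring
  have hDisj : Disjoint (U.image (fun u : F => (u, u))) (U.image (fun u : F => (u, -u))) := by
    rw [Finset.disjoint_left]
    rintro ⟨u, v⟩ h1 hp2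
    simp only [hU, Finset.mem_image, Finset.mem_filter, Finset.mem_univ, true_and,
      Prod.mk.injEq] at h1 hp2
    obtain ⟨w, hw0, rfl, rfl⟩ := h1
    obtain ⟨w', -, rfl, h⟩ := hp2
    apply hw0
    have h' : 2 * w' = 0 := by linear_combination -h
    rcases mul_eq_zero.mp h' with h'' | h''
    · exact absurd h'' h2
    · exact h''
  have hinj1 : (U.image (fun u : F => (u, u))).card = q - 1 := by
    rw [Finset.card_image_of_injective _ (fun a b h => (Prod.mk.injEq _ _ _ _ ▸ h).1), hUcard]
  have hinj2 : (U.image (fun u : F => (u, -u))).card = q - 1 := by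
    rw [Finset.card_image_of_injective _ (fun a b h => (Prod.mk.injEq _ _ _ _ ▸ h).1), hUcard]
  set SQ : Finset F := univ.filter (fun w : F => w ≠ 0 ∧ ∃ s : F, s ≠ 0 ∧ w = s ^ 2) with hSQ
  have hSQcard : 2 * SQ.card = q - 1 := by
    have hmaps : ∀ x ∈ U, (fun x : F => x ^ 2) x ∈ SQ := by
      intro x hx
      simp only [hU, Finset.mem_filter, Finset.mem_univ, true_and] at hx
      simp only [hSQ, Finset.mem_filter, Finset.mem_univ, true_and]
      exact ⟨pow_ne_zero 2 hx, x, hx, rfl⟩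
    have hfib : ∀ w ∈ SQ, (U.filter (fun x => x ^ 2 = w)).card = 2 := by
      intro w hw
      simp only [hSQ, Finset.mem_filter, Finset.mem_univ, true_and] at hw
      obtain ⟨hw0, s, hs0, rfl⟩ := hw
      have hset : U.filter (fun x => x ^ 2 = s ^ 2) = {s, -s} := by
        ext x
        simp only [hU, Finset.filter_filter, Finset.mem_filter, Finset.mem_univ, true_and,
          Finset.mem_insert, Finset.mem_singleton]
        constructor
        · rintro ⟨hx0, hx⟩
          have h' : (x - s) * (x + s) = 0 := by linear_combination hx
          rcases mul_eq_zero.mp h' with h | h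
          · exact Or.inl (by linear_combination h)
          · exact Or.inr (by linear_combination h)
        · rintro (rfl | rfl)
          · exact ⟨hs0, rfl⟩
          · exact ⟨neg_ne_zero.mpr hs0, by ring⟩
      rw [hset, Finset.card_pair]
      intro h
      apply hs0
      have h' : 2 * s = 0 := by linear_combination h
      rcases mul_eq_zero.mp h' with h'' | h''
      · exact absurd h'' h2
      · exact h''
    rw [← hUcard, Finset.card_eq_sum_card_fiberwise hmaps,
      Finset.sum_congr rfl hfib, Finset.sum_const, smul_eq_mul, mul_comm]
  have hAcard : A.card = U.card * SQ.card := by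
    rw [← Finset.card_product]
    refine Finset.card_bij' (fun p _ => (p.1, p.1 * p.2)) (fun p _ => (p.1, p.1⁻¹ * p.2)) ?_ ?_ ?_ ?_
    · rintro ⟨u, v⟩ h
      simp only [hA, Finset.mem_filter, Finset.mem_univ, true_and] at h
      obtain ⟨hu0, hv0, s, hs0, hs⟩ := h
      simp only [hU, hSQ, Finset.mem_product, Finset.mem_filter, Finset.mem_univ, true_and]
      exact ⟨hu0, mul_ne_zero hu0 hv0, s, hs0, hs⟩
    · rintro ⟨u, w⟩ h
      simp only [hU, hSQ, Finset.mem_product, Finset.mem_filter, Finset.mem_univ, true_and] at h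
      obtain ⟨hu0, hw0, s, hs0, rfl⟩ := h
      simp only [hA, Finset.mem_filter, Finset.mem_univ, true_and]
      refine ⟨hu0, mul_ne_zero (inv_ne_zero hu0) (pow_ne_zero 2 hs0), s, hs0, ?_⟩
      field_simp
    · rintro ⟨u, v⟩ h
      simp only [hA, Finset.mem_filter, Finset.mem_univ, true_and] at h
      obtain ⟨hu0, -, -⟩ := h
      simp only [Prod.mk.injEq]
      exact ⟨trivial, inv_mul_cancel_left₀ hu0 v⟩
    · rintro ⟨u, w⟩ h
      simp only [hU, hSQ, Finset.mem_product, Finset.mem_filter, Finset.mem_univ, true_and] at h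
      obtain ⟨hu0, -, -⟩ := h
      simp only [Prod.mk.injEq]
      exact ⟨trivial, mul_inv_cancel_left₀ hu0 w⟩
  have hsplit := Finset.card_filter_add_card_filter_not
    (s := A) (p := fun p : F × F => p.1 ≠ p.2 ∧ p.1 ≠ -p.2)
  rw [hDiag, Finset.card_union_of_disjoint hDisj, hinj1, hinj2] at hsplit
  rw [hTA]
  have hq5 : 5 ≤ q := by
    have : 2 ≤ q := Fintype.one_lt_card
    omega
  obtain ⟨m, hm⟩ : ∃ m, q = 4 * m + 5 := ⟨(q - 5) / 4, by omega⟩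
  have hSQ' : SQ.card = 2 * m + 2 := by omega
  have hTcard : (A.filter (fun p : F × F => p.1 ≠ p.2 ∧ p.1 ≠ -p.2)).card
      = A.card - 2 * (q - 1) := by omega
  rw [hTcard, hAcard, hUcard, hSQ', hm]
  have e1 : (4 * m + 5 - 1) = 4 * m + 4 := by omega
  have e2 : (4 * m + 5 - 5) = 4 * m := by omega
  rw [e1, e2]
  have e3 : (4 * m + 4) * (2 * m + 2) = 8 * (m * m) + 16 * m + 8 := by ring
  have e4 : (4 * m + 4) * (4 * m) = 2 * (8 * (m * m) + 8 * m) := by ring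
  rw [e3, e4, Nat.mul_div_cancel_left _ (by norm_num)]
  omega
end
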